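/- arXiv:2401.15570 — 2 statements merged into one kernel-verified Lean document; each statement's English description precedes it below -/
import Mathlib

section
/- Let φ ∈ V be the solution of the integral equation (IE). Then for every t ∈ (0,T), s ∈ (0,∞)^d and j, j' ∈ X, lim_{u↓0} ∫_{(0,∞)^d} φ(t+u,x,j) α(x,s,j',u) dx = φ(t,s,j). -/
open MeasureTheory Real Filter Matrix

noncomputable section

/-- The positive orthant `(0,∞)^d`. -/
def orthant (d : ℕ) : Set (Fin d → ℝ) := Set.univ.pi fun _ => Set.Ioi (0:ℝ)

/-- The ℓ¹ norm `‖s‖₁ = ∑ l |s l|`. -/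
def norm1 {d : ℕ} (s : Fin d → ℝ) : ℝ := ∑ l, |s l|

/-- The diffusion matrix `a(i) = σ(i) σ(i)ᵀ`. -/
def amat {d k : ℕ} (σm : Fin k → Matrix (Fin d) (Fin d) ℝ) (i : Fin k) :
    Matrix (Fin d) (Fin d) ℝ := σm i * (σm i)ᵀ

/-- The lognormal density `α(x,s,i,v)`. -/
def alpha {d k : ℕ} (r : Fin k → ℝ) (σm : Fin k → Matrix (Fin d) (Fin d) ℝ)
    (x s : Fin d → ℝ) (i : Fin k) (v : ℝ) : ℝ :=
  Real.exp (-(1/2 : ℝ) * ∑ l, ∑ l',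
      (v • amat σm i)⁻¹ l l'
        * (Real.log (x l / s l) - (r i - (1/2 : ℝ) * amat σm i l l) * v)
        * (Real.log (x l' / s l') - (r i - (1/2 : ℝ) * amat σm i l' l') * v))
    / (Real.sqrt ((2 * Real.pi) ^ d * (v • amat σm i).det) * ∏ l, x l)

/-- Membership in the space `V`: continuity on `(0,T)×(0,∞)^d×X` together with
at most linear growth in the space variable. -/
def MemV {d k : ℕ} (T : ℝ) (φ : ℝ → (Fin d → ℝ) → Fin k → ℝ) : Prop :=
  (∀ i : Fin k, ContinuousOn (fun p : ℝ × (Fin d → ℝ) => φ p.1 p.2 i)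
      (Set.Ioo 0 T ×ˢ orthant d)) ∧
  ∃ M : ℝ, ∀ t ∈ Set.Ioo (0:ℝ) T, ∀ s ∈ orthant d, ∀ i : Fin k,
      |φ t s i| ≤ M * (1 + norm1 s)

/-- The weighted sup-norm `‖φ‖_V = sup |φ(t,s,i)|/(1+‖s‖₁)`. -/
def Vnorm {d k : ℕ} (T : ℝ) (φ : ℝ → (Fin d → ℝ) → Fin k → ℝ) : ℝ :=
  sSup {y : ℝ | ∃ t ∈ Set.Ioo (0:ℝ) T, ∃ s ∈ orthant d, ∃ i : Fin k,
      y = |φ t s i| / (1 + norm1 s)}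

/-- The Black–Scholes–Merton type solution `η_i(t,s)`. -/
def eta {d k : ℕ} (r : Fin k → ℝ) (σm : Fin k → Matrix (Fin d) (Fin d) ℝ)
    (K : (Fin d → ℝ) → ℝ) (T : ℝ) (i : Fin k) (t : ℝ) (s : Fin d → ℝ) : ℝ :=
  if t < T then
    Real.exp (-(r i) * (T - t)) * ∫ x in orthant d, K x * alpha r σm x s i (T - t)
  else K s

/-- The operator `𝒜` from the integral equation. -/
def Aop {d k : ℕ} (r : Fin k → ℝ) (σm : Fin k → Matrix (Fin d) (Fin d) ℝ)
    (Λ : Fin k → Fin k → ℝ) (K : (Fin d → ℝ) → ℝ) (T : ℝ)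
    (φ : ℝ → (Fin d → ℝ) → Fin k → ℝ) (t : ℝ) (s : Fin d → ℝ) (i : Fin k) : ℝ :=
  Real.exp (-(-(Λ i i)) * (T - t)) * eta r σm K T i t s
  + ∫ v in (0:ℝ)..(T - t),
      Real.exp (-((-(Λ i i)) + r i) * v) *
        ∑ j ∈ Finset.univ.filter (fun j => j ≠ i), Λ i j *
          ∫ x in orthant d, φ (t + v) x j * alpha r σm x s i v

/-- `φ` solves the integral equation (IE) on `(0,T)×(0,∞)^d×X`. -/
def SolvesIE {d k : ℕ} (r : Fin k → ℝ) (σm : Fin k → Matrix (Fin d) (Fin d) ℝ)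
    (Λ : Fin k → Fin k → ℝ) (K : (Fin d → ℝ) → ℝ) (T : ℝ)
    (φ : ℝ → (Fin d → ℝ) → Fin k → ℝ) : Prop :=
  ∀ t ∈ Set.Ioo (0:ℝ) T, ∀ s ∈ orthant d, ∀ i : Fin k,
    φ t s i = Aop r σm Λ K T φ t s i

/-! The substitution `x_l = s_l exp (u μ_l + √u (σ z)_l)`, with `σ = σ(j')` and `μ` the drift
`r(j') - a_ll(j')/2` of `α`, maps `ℝ^d` bijectively onto `(0,∞)^d`; its Jacobian
`√u^d |det σ| ∏ x_l` cancels the normalisation of `α(x,s,j',u)` and turns the quadratic form into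
`|z|²`. Hence `∫ φ(t+u,x,j) α(x,s,j',u) dx = ∫ φ(t+u,x(u,z),j) g(z) dz` with `g` the standard
Gaussian density. As `u ↓ 0`, `x(u,z) → s` for every `z`, so the integrand tends to
`φ(t,s,j) g(z)` by continuity of `φ`, while the linear growth of `φ` bounds it by
`C exp (b ∑ |z_l|) g(z)`, which is integrable: dominated convergence concludes. -/

open ProbabilityTheory Topology

lemma mem_orthant_iff {d : ℕ} {x : Fin d → ℝ} : x ∈ orthant d ↔ ∀ l, 0 < x l := by
  simp [orthant, Set.mem_pi]

lemma norm1_nonneg {d : ℕ} (x : Fin d → ℝ) : 0 ≤ norm1 x :=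
  Finset.sum_nonneg fun _ _ => abs_nonneg _

def stdGaussianPDF (d : ℕ) (z : Fin d → ℝ) : ℝ := ∏ l, gaussianPDFReal 0 1 (z l)

lemma gaussianPDFReal_zero_one (x : ℝ) :
    gaussianPDFReal 0 1 x = (√(2 * π))⁻¹ * exp (-x ^ 2 / 2) := by
  simp [gaussianPDFReal]

lemma stdGaussianPDF_nonneg {d : ℕ} (z : Fin d → ℝ) : 0 ≤ stdGaussianPDF d z :=
  Finset.prod_nonneg fun _ _ => gaussianPDFReal_nonneg _ _ _

lemma continuous_stdGaussianPDF (d : ℕ) : Continuous (stdGaussianPDF d) := by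
  unfold stdGaussianPDF
  simp only [gaussianPDFReal_zero_one]
  fun_prop

lemma integral_stdGaussianPDF (d : ℕ) : ∫ z, stdGaussianPDF d z = 1 := by
  unfold stdGaussianPDF
  rw [integral_fintype_prod_volume_eq_prod]
  simp [integral_gaussianPDFReal_eq_one]

lemma integrable_exp_mul_abs_mul_gaussianPDFReal (b : ℝ) :
    Integrable fun x => exp (b * |x|) * gaussianPDFReal 0 1 x := by
  refine (((integrable_exp_neg_mul_sq (b := 1 / 4) (by norm_num)).const_mul
    ((√(2 * π))⁻¹ * exp (b ^ 2)))).mono' (by fun_prop) (.of_forall fun x => ?_)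
  rw [gaussianPDFReal_zero_one, norm_of_nonneg (by positivity), mul_left_comm, ← exp_add,
    mul_assoc, ← exp_add]
  refine mul_le_mul_of_nonneg_left (exp_le_exp.2 ?_) (by positivity)
  nlinarith [sq_nonneg (|x| / 2 - b), sq_abs x]

lemma integrable_exp_mul_sum_abs_mul_stdGaussianPDF {d : ℕ} (b : ℝ) :
    Integrable fun z : Fin d → ℝ => exp (b * ∑ l, |z l|) * stdGaussianPDF d z := by
  have h : ∀ z : Fin d → ℝ, exp (b * ∑ l, |z l|) * stdGaussianPDF d z
      = ∏ l, exp (b * |z l|) * gaussianPDFReal 0 1 (z l) := fun z => by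
    rw [stdGaussianPDF, Finset.mul_sum, exp_sum, Finset.prod_mul_distrib]
  simp_rw [h]
  exact Integrable.fintype_prod (f := fun _ x => exp (b * |x|) * gaussianPDFReal 0 1 x)
    fun _ => integrable_exp_mul_abs_mul_gaussianPDFReal b

section QuadraticForm

variable {n : Type*} [Fintype n]

lemma sum_sum_mul_mul_eq_dotProduct_mulVec (M : Matrix n n ℝ) (w : n → ℝ) :
    ∑ l, ∑ l', M l l' * w l * w l' = w ⬝ᵥ (M *ᵥ w) := by
  simp only [dotProduct, mulVec, Finset.mul_sum]
  exact Finset.sum_congr rfl fun _ _ => Finset.sum_congr rfl fun _ _ => by ring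

lemma dotProduct_mul_transpose_inv_mulVec [DecidableEq n] {τ : Matrix n n ℝ} (hτ : IsUnit τ.det)
    (z : n → ℝ) : (τ *ᵥ z) ⬝ᵥ ((τ * τᵀ)⁻¹ *ᵥ (τ *ᵥ z)) = z ⬝ᵥ z := by
  have hτT : IsUnit τᵀ.det := by rwa [det_transpose]
  rw [Matrix.mul_inv_rev, mulVec_mulVec, Matrix.mul_assoc, nonsing_inv_mul _ hτ, Matrix.mul_one,
    dotProduct_mulVec, ← vecMul_transpose, vecMul_vecMul, mul_nonsing_inv _ hτT, vecMul_one]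

end QuadraticForm

lemma isUnit_det_sqrt_smul {d : ℕ} {σ : Matrix (Fin d) (Fin d) ℝ} (hσ : IsUnit σ.det) {u : ℝ}
    (hu : 0 < u) : IsUnit (√u • σ).det := by
  rw [det_smul, isUnit_iff_ne_zero]
  exact mul_ne_zero (pow_ne_zero _ (sqrt_pos.2 hu).ne') hσ.ne_zero

section LognormalMap

variable {d : ℕ} (s m : Fin d → ℝ) (τ : Matrix (Fin d) (Fin d) ℝ)

def lognormalMap (z : Fin d → ℝ) : Fin d → ℝ := fun l => s l * exp (m l + (τ *ᵥ z) l)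

variable {s m τ}

lemma lognormalMap_mem_orthant (hs : s ∈ orthant d) (z : Fin d → ℝ) :
    lognormalMap s m τ z ∈ orthant d := by
  rw [mem_orthant_iff] at hs ⊢
  exact fun l => mul_pos (hs l) (exp_pos _)

lemma log_lognormalMap_div (hs : s ∈ orthant d) (z : Fin d → ℝ) (l : Fin d) :
    log (lognormalMap s m τ z l / s l) = m l + (τ *ᵥ z) l := by
  rw [lognormalMap, mul_div_cancel_left₀ _ (mem_orthant_iff.1 hs l).ne', log_exp]

lemma range_lognormalMap (hτ : IsUnit τ.det) (hs : s ∈ orthant d) :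
    Set.range (lognormalMap s m τ) = orthant d := by
  refine subset_antisymm (Set.range_subset_iff.2 (lognormalMap_mem_orthant hs)) fun x hx => ?_
  refine ⟨τ⁻¹ *ᵥ fun l => log (x l / s l) - m l, funext fun l => ?_⟩
  rw [lognormalMap, mulVec_mulVec, mul_nonsing_inv _ hτ, one_mulVec, add_sub_cancel,
    exp_log (div_pos (mem_orthant_iff.1 hx l) (mem_orthant_iff.1 hs l)),
    mul_div_cancel₀ _ (mem_orthant_iff.1 hs l).ne']

lemma injective_lognormalMap (hτ : IsUnit τ.det) (hs : s ∈ orthant d) :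
    Function.Injective (lognormalMap s m τ) := by
  intro z z' h
  refine (mulVec_injective_iff_isUnit.2 ((isUnit_iff_isUnit_det τ).2 hτ)) (funext fun l => ?_)
  have := congrArg (fun x => log (x l / s l)) h
  simp only [log_lognormalMap_div hs] at this
  linarith

lemma hasFDerivAt_lognormalMap (z : Fin d → ℝ) :
    HasFDerivAt (lognormalMap s m τ)
      (LinearMap.toContinuousLinearMap (toLin' (diagonal (lognormalMap s m τ z) * τ))) z := by
  refine hasFDerivAt_pi'' fun l => ?_
  have hlin : HasFDerivAt (fun z : Fin d → ℝ => (τ *ᵥ z) l)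
      ((ContinuousLinearMap.proj l).comp (LinearMap.toContinuousLinearMap (toLin' τ))) z :=
    ((ContinuousLinearMap.proj l).comp (LinearMap.toContinuousLinearMap (toLin' τ))).hasFDerivAt
  refine ((hlin.const_add (m l)).exp.const_mul (s l)).congr_fderiv ?_
  ext v
  simp [-mulVec_mulVec, mulVec_diagonal, lognormalMap, mul_assoc]

lemma continuous_lognormalMap : Continuous (lognormalMap s m τ) := by
  unfold lognormalMap
  fun_prop

lemma tendsto_lognormalMap_smul_nhds_zero (μ : Fin d → ℝ) (σ : Matrix (Fin d) (Fin d) ℝ)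
    (z : Fin d → ℝ) : Tendsto (fun u : ℝ => lognormalMap s (u • μ) (√u • σ) z) (𝓝 0) (𝓝 s) := by
  have : Continuous fun u : ℝ => lognormalMap s (u • μ) (√u • σ) z := by
    unfold lognormalMap
    simp only [smul_mulVec]
    fun_prop
  convert this.tendsto 0
  ext l
  simp [lognormalMap]

lemma one_add_norm1_lognormalMap_le (hs : s ∈ orthant d) {R b : ℝ} (hm : ∀ l, |m l| ≤ R)
    (hτ : ∀ l l', |τ l l'| ≤ b) (hb : 0 ≤ b) (z : Fin d → ℝ) :
    1 + norm1 (lognormalMap s m τ z)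
      ≤ (1 + (∑ l, s l) * exp R) * exp (b * ∑ l, |z l|) := by
  have hexp : ∀ l, m l + (τ *ᵥ z) l ≤ R + b * ∑ l, |z l| := fun l => by
    have : |(τ *ᵥ z) l| ≤ b * ∑ l, |z l| := by
      calc |(τ *ᵥ z) l| ≤ ∑ l', |τ l l'| * |z l'| := by
            simpa [mulVec, dotProduct, abs_mul] using
              Finset.abs_sum_le_sum_abs (fun l' => τ l l' * z l') Finset.univ
        _ ≤ ∑ l', b * |z l'| := by gcongr with l'; exact hτ l l'
        _ = b * ∑ l, |z l| := (Finset.mul_sum ..).symm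
    linarith [le_abs_self (m l), hm l, le_abs_self ((τ *ᵥ z) l)]
  have hnorm1 : norm1 (lognormalMap s m τ z) ≤ (∑ l, s l) * exp R * exp (b * ∑ l, |z l|) := by
    rw [mul_assoc, ← exp_add, Finset.sum_mul]
    refine Finset.sum_le_sum fun l _ => ?_
    rw [abs_of_pos (mem_orthant_iff.1 (lognormalMap_mem_orthant hs z) l)]
    exact mul_le_mul_of_nonneg_left (exp_le_exp.2 (hexp l)) (mem_orthant_iff.1 hs l).le
  have : 1 ≤ exp (b * ∑ l, |z l|) := one_le_exp (by positivity)
  nlinarith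

end LognormalMap

section Alpha

variable {d k : ℕ} (r : Fin k → ℝ) (σm : Fin k → Matrix (Fin d) (Fin d) ℝ) (i : Fin k)

def drift : Fin d → ℝ := fun l => r i - 1 / 2 * amat σm i l l

variable {r σm i}

lemma smul_amat {u : ℝ} (hu : 0 ≤ u) : u • amat σm i = (√u • σm i) * (√u • σm i)ᵀ := by
  rw [amat, transpose_smul, smul_mul_smul_comm, ← sq, sq_sqrt hu]

lemma alpha_lognormalMap_mul_abs_det (hσ : IsUnit (σm i).det) {s : Fin d → ℝ}
    (hs : s ∈ orthant d) {u : ℝ} (hu : 0 < u) (z : Fin d → ℝ) :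
    alpha r σm (lognormalMap s (u • drift r σm i) (√u • σm i) z) s i u
      * |(diagonal (lognormalMap s (u • drift r σm i) (√u • σm i) z) * (√u • σm i)).det|
      = stdGaussianPDF d z := by
  set τ := √u • σm i
  set x := lognormalMap s (u • drift r σm i) τ z
  have hτ : IsUnit τ.det := isUnit_det_sqrt_smul hσ hu
  have hquad : ∑ l, ∑ l', (u • amat σm i)⁻¹ l l'
        * (log (x l / s l) - (r i - 1 / 2 * amat σm i l l) * u)
        * (log (x l' / s l') - (r i - 1 / 2 * amat σm i l' l') * u) = ∑ l, z l ^ 2 := by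
    have hlog : ∀ l, log (x l / s l) - (r i - 1 / 2 * amat σm i l l) * u = (τ *ᵥ z) l :=
      fun l => by simp only [x, log_lognormalMap_div hs, drift, Pi.smul_apply, smul_eq_mul]; ring
    have hA : u • amat σm i = τ * τᵀ := smul_amat hu.le
    simp only [hlog]
    rw [sum_sum_mul_mul_eq_dotProduct_mulVec, hA, dotProduct_mul_transpose_inv_mulVec hτ]
    simp only [dotProduct, sq]
  have hnorm : √((2 * π) ^ d * (u • amat σm i).det) = √(2 * π) ^ d * |τ.det| := by
    have h2π : (2 * π) ^ d = (√(2 * π) ^ d) ^ 2 := by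
      rw [← pow_mul, mul_comm d 2, pow_mul, sq_sqrt (by positivity)]
    rw [smul_amat hu.le, det_mul, det_transpose, sqrt_mul (by positivity), h2π,
      sqrt_sq (by positivity), sqrt_mul_self_eq_abs]
  have hjac : |(diagonal x * τ).det| = (∏ l, x l) * |τ.det| := by
    rw [det_mul, det_diagonal, abs_mul, abs_of_pos (Finset.prod_pos fun l _ =>
      mem_orthant_iff.1 (lognormalMap_mem_orthant hs z) l)]
  have hx : 0 < ∏ l, x l :=
    Finset.prod_pos fun l _ => mem_orthant_iff.1 (lognormalMap_mem_orthant hs z) l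
  rw [alpha, hquad, hnorm, hjac, stdGaussianPDF]
  simp only [gaussianPDFReal_zero_one, Finset.prod_mul_distrib, Finset.prod_const,
    Finset.card_univ, Fintype.card_fin, ← exp_sum, Finset.mul_sum, inv_pow]
  have hτ0 : |τ.det| ≠ 0 := abs_ne_zero.2 hτ.ne_zero
  field_simp

end Alpha

lemma setIntegral_orthant_mul_alpha {d k : ℕ} {r : Fin k → ℝ}
    {σm : Fin k → Matrix (Fin d) (Fin d) ℝ} {i : Fin k} (hσ : IsUnit (σm i).det)
    {s : Fin d → ℝ} (hs : s ∈ orthant d) {u : ℝ} (hu : 0 < u) (G : (Fin d → ℝ) → ℝ) :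
    ∫ x in orthant d, G x * alpha r σm x s i u
      = ∫ z, G (lognormalMap s (u • drift r σm i) (√u • σm i) z) * stdGaussianPDF d z := by
  have hτ := isUnit_det_sqrt_smul hσ hu
  rw [← range_lognormalMap hτ hs, ← Set.image_univ,
    integral_image_eq_integral_abs_det_fderiv_smul volume MeasurableSet.univ
      (fun z _ => (hasFDerivAt_lognormalMap z).hasFDerivWithinAt)
      (injective_lognormalMap hτ hs).injOn, setIntegral_univ]
  congr 1 with z
  rw [ContinuousLinearMap.det, LinearMap.coe_toContinuousLinearMap, LinearMap.det_toLin',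
    smul_eq_mul, ← alpha_lognormalMap_mul_abs_det hσ hs hu z]
  ring

lemma abs_comp_lognormalMap_smul_le {d : ℕ} {M u : ℝ} {s μ : Fin d → ℝ}
    {σ : Matrix (Fin d) (Fin d) ℝ} {f : (Fin d → ℝ) → ℝ}
    (hf : ∀ x ∈ orthant d, |f x| ≤ M * (1 + norm1 x)) (hs : s ∈ orthant d) (hu0 : 0 ≤ u)
    (hu1 : u ≤ 1) (z : Fin d → ℝ) :
    |f (lognormalMap s (u • μ) (√u • σ) z)|
      ≤ |M| * (1 + (∑ l, s l) * exp (∑ l, |μ l|))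
        * exp ((∑ p : Fin d × Fin d, |σ p.1 p.2|) * ∑ l, |z l|) := by
  have hm : ∀ l, |(u • μ) l| ≤ ∑ l, |μ l| := fun l => by
    rw [Pi.smul_apply, smul_eq_mul, abs_mul, abs_of_nonneg hu0]
    exact (mul_le_of_le_one_left (abs_nonneg _) hu1).trans
      (Finset.single_le_sum (fun l _ => abs_nonneg (μ l)) (Finset.mem_univ l))
  have hτ : ∀ l l', |(√u • σ) l l'| ≤ ∑ p : Fin d × Fin d, |σ p.1 p.2| := fun l l' => by
    rw [Matrix.smul_apply, smul_eq_mul, abs_mul, abs_of_nonneg (sqrt_nonneg u)]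
    exact (mul_le_of_le_one_left (abs_nonneg _) (sqrt_le_one.2 hu1)).trans
      (Finset.single_le_sum (f := fun p : Fin d × Fin d => |σ p.1 p.2|)
        (fun _ _ => abs_nonneg _) (Finset.mem_univ (l, l')))
  have hx := lognormalMap_mem_orthant (m := u • μ) (τ := √u • σ) hs z
  calc |f (lognormalMap s (u • μ) (√u • σ) z)|
      ≤ |M| * (1 + norm1 (lognormalMap s (u • μ) (√u • σ) z)) :=
        (hf _ hx).trans (mul_le_mul_of_nonneg_right (le_abs_self M)
          (add_nonneg zero_le_one (norm1_nonneg _)))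
    _ ≤ _ := by
        rw [mul_assoc]
        exact mul_le_mul_of_nonneg_left
          (one_add_norm1_lognormalMap_le hs hm hτ (by positivity) z) (abs_nonneg M)

theorem tendsto_integral_comp_lognormalMap {d : ℕ} {T M t : ℝ} {s μ : Fin d → ℝ}
    {σ : Matrix (Fin d) (Fin d) ℝ} {ψ : ℝ → (Fin d → ℝ) → ℝ}
    (hψc : ContinuousOn (fun p : ℝ × (Fin d → ℝ) => ψ p.1 p.2) (Set.Ioo 0 T ×ˢ orthant d))
    (hψM : ∀ t ∈ Set.Ioo 0 T, ∀ x ∈ orthant d, |ψ t x| ≤ M * (1 + norm1 x))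
    (ht : t ∈ Set.Ioo 0 T) (hs : s ∈ orthant d) :
    Tendsto (fun u => ∫ z, ψ (t + u) (lognormalMap s (u • μ) (√u • σ) z) * stdGaussianPDF d z)
      (𝓝[>] 0) (𝓝 (ψ t s)) := by
  set b := ∑ p : Fin d × Fin d, |σ p.1 p.2|
  set C := |M| * (1 + (∑ l, s l) * exp (∑ l, |μ l|))
  have hI : Set.Ioo 0 (min 1 (T - t)) ∈ 𝓝[>] (0 : ℝ) :=
    Ioo_mem_nhdsGT (lt_min one_pos (by linarith [ht.2]))
  have htu : ∀ u ∈ Set.Ioo 0 (min 1 (T - t)), t + u ∈ Set.Ioo 0 T := fun u hu =>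
    ⟨by linarith [ht.1, hu.1], by linarith [hu.2.trans_le (min_le_right _ _)]⟩
  have hdom : ∀ u ∈ Set.Ioo 0 (min 1 (T - t)), ∀ z,
      ‖ψ (t + u) (lognormalMap s (u • μ) (√u • σ) z) * stdGaussianPDF d z‖
        ≤ C * (exp (b * ∑ l, |z l|) * stdGaussianPDF d z) := fun u hu z => by
    rw [norm_mul, norm_of_nonneg (stdGaussianPDF_nonneg z), ← mul_assoc]
    exact mul_le_mul_of_nonneg_right (abs_comp_lognormalMap_smul_le (hψM _ (htu u hu)) hs
      hu.1.le (hu.2.trans_le (min_le_left _ _)).le z) (stdGaussianPDF_nonneg z)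
  rw [show ψ t s = ∫ z, ψ t s * stdGaussianPDF d z by
    rw [integral_const_mul, integral_stdGaussianPDF, mul_one]]
  refine tendsto_integral_filter_of_dominated_convergence _ ?_
    (eventually_of_mem hI fun u hu => .of_forall (hdom u hu))
    ((integrable_exp_mul_sum_abs_mul_stdGaussianPDF b).const_mul C) (.of_forall fun z => ?_)
  · refine eventually_of_mem hI fun u hu => ?_
    have hcont : Continuous fun z => ψ (t + u) (lognormalMap s (u • μ) (√u • σ) z) :=
      hψc.comp_continuous (continuous_const.prodMk continuous_lognormalMap)
        fun z => ⟨htu u hu, lognormalMap_mem_orthant hs z⟩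
    exact (hcont.mul (continuous_stdGaussianPDF d)).aestronglyMeasurable
  · have htime : Tendsto (fun u => t + u) (𝓝 0) (𝓝 t) := by
      simpa using (tendsto_const_nhds (x := t)).add (tendsto_id (x := 𝓝 (0 : ℝ)))
    have hpath : Tendsto (fun u => (t + u, lognormalMap s (u • μ) (√u • σ) z)) (𝓝[>] 0)
        (𝓝[Set.Ioo 0 T ×ˢ orthant d] (t, s)) :=
      tendsto_nhdsWithin_iff.2
        ⟨(htime.prodMk_nhds (tendsto_lognormalMap_smul_nhds_zero μ σ z)).mono_left
          nhdsWithin_le_nhds,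
          eventually_of_mem hI fun u hu => ⟨htu u hu, lognormalMap_mem_orthant hs z⟩⟩
    exact ((hψc (t, s) ⟨ht, hs⟩).tendsto.comp hpath).mul_const _

theorem tendsto_setIntegral_mul_alpha {d k : ℕ} {r : Fin k → ℝ}
    {σm : Fin k → Matrix (Fin d) (Fin d) ℝ} {i : Fin k} (hσ : IsUnit (σm i).det)
    {T M t : ℝ} {s : Fin d → ℝ} {ψ : ℝ → (Fin d → ℝ) → ℝ}
    (hψc : ContinuousOn (fun p : ℝ × (Fin d → ℝ) => ψ p.1 p.2) (Set.Ioo 0 T ×ˢ orthant d))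
    (hψM : ∀ t ∈ Set.Ioo 0 T, ∀ x ∈ orthant d, |ψ t x| ≤ M * (1 + norm1 x))
    (ht : t ∈ Set.Ioo 0 T) (hs : s ∈ orthant d) :
    Tendsto (fun u => ∫ x in orthant d, ψ (t + u) x * alpha r σm x s i u) (𝓝[>] 0)
      (𝓝 (ψ t s)) :=
  (tendsto_integral_comp_lognormalMap hψc hψM ht hs).congr'
    (eventually_mem_nhdsWithin.mono fun _ hu => (setIntegral_orthant_mul_alpha hσ hs hu _).symm)

theorem stmt_6_general (d k : ℕ)
    (r : Fin k → ℝ)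
    (σm : Fin k → Matrix (Fin d) (Fin d) ℝ) (hσ : ∀ i, IsUnit (σm i).det)
    (T : ℝ)
    (φ : ℝ → (Fin d → ℝ) → Fin k → ℝ)
    (hφV : MemV T φ)
    (t : ℝ) (ht : t ∈ Set.Ioo (0:ℝ) T) (s : Fin d → ℝ) (hs : s ∈ orthant d)
    (j j' : Fin k) :
    Tendsto (fun u => ∫ x in orthant d, φ (t + u) x j * alpha r σm x s j' u)
      (nhdsWithin 0 (Set.Ioi 0)) (nhds (φ t s j)) := by
  obtain ⟨hφc, M, hφM⟩ := hφV
  exact tendsto_setIntegral_mul_alpha (hσ j') (hφc j) (fun t ht x hx => hφM t ht x hx j) ht hs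

theorem stmt_6 (d k : ℕ) (hd : 1 ≤ d) (hk : 0 < k)
    (r : Fin k → ℝ) (hr : ∀ i, 0 ≤ r i)
    (σm : Fin k → Matrix (Fin d) (Fin d) ℝ) (hσ : ∀ i, IsUnit (σm i).det)
    (Λ : Fin k → Fin k → ℝ) (hΛ1 : ∀ i j, i ≠ j → 0 ≤ Λ i j)
    (hΛ2 : ∀ i : Fin k, ∑ j, Λ i j = 0)
    (T : ℝ) (hT : 0 < T)
    (K : (Fin d → ℝ) → ℝ) (hK0 : ∀ s ∈ orthant d, 0 ≤ K s)
    (c : NNReal) (hKlip : LipschitzOnWith c K (orthant d))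
    (φ : ℝ → (Fin d → ℝ) → Fin k → ℝ)
    (hφV : MemV T φ) (hφIE : SolvesIE r σm Λ K T φ)
    (t : ℝ) (ht : t ∈ Set.Ioo (0:ℝ) T) (s : Fin d → ℝ) (hs : s ∈ orthant d)
    (j j' : Fin k) :
    Tendsto (fun u => ∫ x in orthant d, φ (t + u) x j * alpha r σm x s j' u)
      (nhdsWithin 0 (Set.Ioi 0)) (nhds (φ t s j)) :=
  stmt_6_general d k r σm hσ T φ hφV t ht s hs j j'
end
end

section
/- Fix l ∈ {1,…,d} and suppose D_l := min_{i∈X}(a_{ll}(i) − 2r(i)) ≤ 0. Fix (t̂, ŝ) ∈ [0,T) × R with ln(s_l^u/ŝ_l) > −D_l (T − t̂). Set ε_l = (T − t̂) ln k_l / ln(s_l^u/ŝ_l) and let γ_l be any number with 0 < γ_l < min( (1/(2 max_{i∈X} a_{ll}(i)))(1 + D_l ε_l/ln k_l), ε_l/(2 ln k_l) ) (both bounds are independent of k_l since ε_l/ln k_l = (T−t̂)/ln(s_l^u/ŝ_l)). Then there exists K₀ > 1 such that for every k_l ≥ K₀, the function y_l(t,s,i) = (T+ε_l−t)^{−1/2}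 exp(−γ_l (ln(s_l/(k_l s_l^u)))²/(T+ε_l−t)) satisfies ∂y_l/∂t(t,s,i) + L y_l(t,s,i) ≤ 0 for all (t,s,i) ∈ (0,T) × R × X. -/
open MeasureTheory Real Filter Matrix

noncomputable section

/-- Partial derivative in the `l`-th space coordinate. -/
def pd {d : ℕ} (l : Fin d) (f : (Fin d → ℝ) → ℝ) (s : Fin d → ℝ) : ℝ :=
  deriv (fun c => f (Function.update s l c)) (s l)

/-- The spatial operator `𝕃`. -/
def Lop {d k : ℕ} (r : Fin k → ℝ) (σm : Fin k → Matrix (Fin d) (Fin d) ℝ)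
    (Λ : Fin k → Fin k → ℝ) (φ : ℝ → (Fin d → ℝ) → Fin k → ℝ)
    (t : ℝ) (s : Fin d → ℝ) (i : Fin k) : ℝ :=
  r i * ∑ l, s l * pd l (fun s' => φ t s' i) s
  + (1/2 : ℝ) * ∑ l, ∑ l',
      amat σm i l l' * s l * s l' * pd l (pd l' (fun s' => φ t s' i)) s
  - r i * φ t s i + ∑ j, Λ i j * φ t s j

/-- The open box `R = Π_l (s_l^b, s_l^u)`. -/
def Rset {d : ℕ} (sb su : Fin d → ℝ) : Set (Fin d → ℝ) :=
  Set.univ.pi fun l => Set.Ioo (sb l) (su l)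

/-- The barrier function `y_l(t,s) = (T+ε_l−t)^{-1/2} exp(−γ_l (ln(s_l/(k_l s_l^u)))²/(T+ε_l−t))`. -/
def yl {d : ℕ} (T εl γl kl slu : ℝ) (l : Fin d) (t : ℝ) (s : Fin d → ℝ) : ℝ :=
  (Real.sqrt (T + εl - t))⁻¹ *
    Real.exp (-γl * (Real.log (s l / (kl * slu)))^2 / (T + εl - t))

/-! Write `τ = T + ε_l - t` and `z = ln (s_l / (k_l s_l^u))`. Since `y_l` depends on `s` only
through `s_l` and the rows of `Λ` sum to zero,
`∂_t y_l + L y_l = (y_l / τ) · barrierRate γ_l a_ll(i) r(i) τ z`.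
For `s ∈ R` we have `w := -z ≥ ln k_l`, and `τ ≤ T + ε_l ≤ T + c w` with `c = ε_l / ln k_l`;
the rate is then nonpositive as soon as `γ_l (-D_l) w + 1/2 ≤ γ_l β w² / τ`, where
`β = 1 - 2 γ_l max_i a_ll(i)`. The upper bound on `γ_l` is exactly `β + D_l c > 0`, so after
clearing `τ` this is a quadratic inequality in `w` with positive leading coefficient, which
holds once `ln k_l` is large. -/

def barrier (γ τ A x : ℝ) : ℝ :=
  (√τ)⁻¹ * exp (-γ * log (x / A) ^ 2 / τ)

lemma yl_eq_barrier {d : ℕ} (T ε γ kl slu : ℝ) (l : Fin d) (t : ℝ) (s : Fin d → ℝ) :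
    yl T ε γ kl slu l t s = barrier γ (T + ε - t) (kl * slu) (s l) := rfl

lemma hasDerivAt_log_div_const {A x : ℝ} (hA : A ≠ 0) (hx : x ≠ 0) :
    HasDerivAt (fun x => log (x / A)) x⁻¹ x := by
  refine (((hasDerivAt_id x).div_const A).log (div_ne_zero hx hA)).congr_deriv ?_
  simp only [id]
  field_simp

lemma hasDerivAt_barrier {γ τ A x : ℝ} (hA : A ≠ 0) (hx : x ≠ 0) :
    HasDerivAt (barrier γ τ A)
      (barrier γ τ A x * (-2 * γ * log (x / A) / τ) / x) x := by
  have hsq : HasDerivAt (fun x => log (x / A) ^ 2) (2 * log (x / A) * x⁻¹) x := by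
    simpa using (hasDerivAt_log_div_const hA hx).fun_pow 2
  refine ((((hsq.const_mul (-γ)).div_const τ).exp).const_mul (√τ)⁻¹).congr_deriv ?_
  unfold barrier
  field_simp

lemma deriv_deriv_barrier {γ τ A x : ℝ} (hτ : τ ≠ 0) (hA : A ≠ 0) (hx : 0 < x) :
    deriv (deriv (barrier γ τ A)) x = barrier γ τ A x / x ^ 2 *
      (4 * γ ^ 2 * log (x / A) ^ 2 / τ ^ 2 - 2 * γ / τ + 2 * γ * log (x / A) / τ) := by
  have hderiv : deriv (barrier γ τ A) =ᶠ[nhds x]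
      fun x => barrier γ τ A x * (-2 * γ * log (x / A) / τ) * x⁻¹ := by
    filter_upwards [Ioi_mem_nhds hx] with y hy
    rw [(hasDerivAt_barrier hA (ne_of_gt hy)).deriv, div_eq_mul_inv]
  have hlog : HasDerivAt (fun x => -2 * γ * log (x / A) / τ) (-2 * γ * x⁻¹ / τ) x :=
    ((hasDerivAt_log_div_const hA hx.ne').const_mul (-2 * γ)).div_const τ
  rw [hderiv.deriv_eq,
    (((hasDerivAt_barrier hA hx.ne').fun_mul hlog).fun_mul (hasDerivAt_inv hx.ne')).deriv]
  field_simp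
  ring

lemma hasDerivAt_inv_sqrt_mul_exp_div {b τ : ℝ} (hτ : 0 < τ) :
    HasDerivAt (fun u => (√u)⁻¹ * exp (b / u))
      ((√τ)⁻¹ * exp (b / τ) * (-(b / τ ^ 2) - 1 / (2 * τ))) τ := by
  have hsqrt : √τ ≠ 0 := (sqrt_pos.2 hτ).ne'
  have hexp := ((hasDerivAt_inv hτ.ne').const_mul b).exp
  simp only [div_eq_mul_inv] at hexp ⊢
  refine (((hasDerivAt_sqrt hτ.ne').fun_inv hsqrt).fun_mul hexp).congr_deriv ?_
  have hsq : √τ ^ 2 = τ := sq_sqrt hτ.le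
  field_simp
  rw [hsq]
  ring

lemma hasDerivAt_barrier_sub {γ A x c t : ℝ} (hτ : 0 < c - t) :
    HasDerivAt (fun t => barrier γ (c - t) A x)
      (barrier γ (c - t) A x * (1 / (2 * (c - t)) - γ * log (x / A) ^ 2 / (c - t) ^ 2)) t := by
  have h := (hasDerivAt_inv_sqrt_mul_exp_div (b := -γ * log (x / A) ^ 2) hτ).comp t
    ((hasDerivAt_id t).const_sub c)
  refine h.congr_deriv ?_
  unfold barrier
  ring

lemma pd_comp_apply {d : ℕ} (m l : Fin d) (g : ℝ → ℝ) (s : Fin d → ℝ) :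
    pd m (fun s' => g (s' l)) s = if m = l then deriv g (s l) else 0 := by
  unfold pd
  split_ifs with h
  · subst h; simp
  · simp [Function.update_of_ne (Ne.symm h)]

lemma Lop_comp_apply {d k : ℕ} (r : Fin k → ℝ) (σm : Fin k → Matrix (Fin d) (Fin d) ℝ)
    (Λ : Fin k → Fin k → ℝ) (g : ℝ → ℝ → ℝ) (l : Fin d) (t : ℝ) (s : Fin d → ℝ) (i : Fin k)
    (hΛ : ∑ j, Λ i j = 0) :
    Lop r σm Λ (fun t' s' _ => g t' (s' l)) t s i
      = r i * (s l * deriv (g t) (s l))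
        + 1 / 2 * (amat σm i l l * s l * s l * deriv (deriv (g t)) (s l)) - r i * g t (s l) := by
  have hpd : ∀ m, pd m (fun s' => g t (s' l))
      = fun s' => (if m = l then deriv (g t) else fun _ => 0) (s' l) := by
    intro m
    funext s'
    rw [pd_comp_apply]
    split_ifs <;> rfl
  simp only [Lop, hpd, pd_comp_apply, ← Finset.sum_mul, hΛ]
  simp [Finset.sum_ite_eq', apply_ite (fun f : ℝ → ℝ => deriv f (s l))]

def barrierRate (γ a ρ τ z : ℝ) : ℝ :=
  γ * (z ^ 2 / τ) * (2 * a * γ - 1) + γ * z * (a - 2 * ρ) + (1 - 2 * a * γ) / 2 - ρ * τ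

lemma deriv_yl_add_Lop_yl {d k : ℕ} (r : Fin k → ℝ) (σm : Fin k → Matrix (Fin d) (Fin d) ℝ)
    (Λ : Fin k → Fin k → ℝ) {T ε γ kl slu t : ℝ} {l : Fin d} {s : Fin d → ℝ} {i : Fin k}
    (hΛ : ∑ j, Λ i j = 0) (hτ : 0 < T + ε - t) (hA : kl * slu ≠ 0) (hs : 0 < s l) :
    deriv (fun t' => yl T ε γ kl slu l t' s) t
        + Lop r σm Λ (fun t' s' _ => yl T ε γ kl slu l t' s') t s i
      = yl T ε γ kl slu l t s / (T + ε - t) *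
        barrierRate γ (amat σm i l l) (r i) (T + ε - t) (log (s l / (kl * slu))) := by
  have hLop := Lop_comp_apply r σm Λ (fun t x => barrier γ (T + ε - t) (kl * slu) x) l t s i hΛ
  simp only [← yl_eq_barrier] at hLop
  rw [hLop]
  simp only [yl_eq_barrier]
  rw [(hasDerivAt_barrier_sub hτ).deriv, (hasDerivAt_barrier hA hs.ne').deriv,
    deriv_deriv_barrier hτ.ne' hA hs]
  unfold barrierRate
  field_simp
  ring

lemma barrierRate_nonpos {γ a ρ D β τ z : ℝ} (hγ : 0 < γ) (ha : 0 ≤ a) (hρ : 0 ≤ ρ) (hτ : 0 < τ)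
    (hz : z ≤ 0) (hβ : β ≤ 1 - 2 * a * γ) (hD : D ≤ a - 2 * ρ)
    (hkey : γ * (-D) * (-z) + 1 / 2 ≤ γ * β * (-z) ^ 2 / τ) :
    barrierRate γ a ρ τ z ≤ 0 := by
  have hu : 0 ≤ z ^ 2 / τ := by positivity
  unfold barrierRate
  rw [neg_sq, mul_div_assoc] at hkey
  nlinarith [mul_nonneg (sub_nonneg.2 hβ) (mul_nonneg hγ.le hu),
    mul_nonneg (sub_nonneg.2 hD) (mul_nonneg hγ.le (neg_nonneg.2 hz)),
    mul_nonneg hρ hτ.le, mul_nonneg ha hγ.le]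

lemma exists_forall_ge_mul_add_le_mul_sq_div {γ β D c T : ℝ} (hγ : 0 < γ) (hc : 0 < c)
    (hT : 0 < T) (hD : D ≤ 0) (hβ : 0 < β + D * c) :
    ∃ W, 0 < W ∧ ∀ w, W ≤ w → ∀ τ, 0 < τ → τ ≤ T + c * w →
      γ * (-D) * w + 1 / 2 ≤ γ * β * w ^ 2 / τ := by
  have hα : 0 < γ * (β + D * c) := mul_pos hγ hβ
  refine ⟨max 1 ((γ * (-D) * T + c / 2 + T / 2) / (γ * (β + D * c))), by positivity,
    fun w hw τ hτ hτw => ?_⟩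
  have hw1 : 1 ≤ w := le_of_max_le_left hw
  have hquad : (γ * (-D) * T + c / 2) * w + T / 2 ≤ γ * (β + D * c) * w ^ 2 := by
    have := (div_le_iff₀ hα).1 (le_of_max_le_right hw)
    nlinarith
  have hβ0 : 0 ≤ β := by nlinarith
  calc γ * (-D) * w + 1 / 2 ≤ γ * β * w ^ 2 / (T + c * w) := by
        rw [le_div_iff₀ (by positivity)]
        linarith
    _ ≤ γ * β * w ^ 2 / τ := div_le_div_of_nonneg_left (by positivity) hτ hτw

lemma amat_apply_self_nonneg {d k : ℕ} (σm : Fin k → Matrix (Fin d) (Fin d) ℝ) (i : Fin k)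
    (l : Fin d) : 0 ≤ amat σm i l l := by
  simp only [amat, mul_apply, transpose_apply]
  exact Finset.sum_nonneg fun j _ => mul_self_nonneg _

lemma log_le_neg_log_div_mul {kl x u : ℝ} (hkl : 0 < kl) (hx : 0 < x) (hxu : x ≤ u) :
    log kl ≤ -log (x / (kl * u)) := by
  have hu : 0 < u := hx.trans_le hxu
  rw [log_div hx.ne' (by positivity), log_mul hkl.ne' hu.ne']
  linarith [log_le_log hx hxu]

lemma one_sub_two_mul_add_pos_of_lt {a γ x : ℝ} (ha : 0 ≤ a) (hγ : 0 < γ)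
    (h : γ < 1 / (2 * a) * (1 + x)) : 0 < 1 - 2 * a * γ + x := by
  rcases ha.eq_or_lt with rfl | ha
  · simp only [mul_zero, div_zero, zero_mul] at h
    linarith
  · rw [div_mul_eq_mul_div, one_mul, lt_div_iff₀ (by positivity)] at h
    linarith

theorem stmt_16_general (d k : ℕ) (hk : 0 < k)
    (r : Fin k → ℝ) (hr : ∀ i, 0 ≤ r i)
    (σm : Fin k → Matrix (Fin d) (Fin d) ℝ)
    (Λ : Fin k → Fin k → ℝ)
    (hΛ2 : ∀ i : Fin k, ∑ j, Λ i j = 0)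
    (T : ℝ) (hT : 0 < T)
    (sb su : Fin d → ℝ) (hbu : ∀ l, 0 ≤ sb l ∧ sb l < su l)
    (l : Fin d)
    (Dl : ℝ)
    (hDl : Dl = Finset.univ.inf' ⟨⟨0, hk⟩, Finset.mem_univ _⟩
        (fun i : Fin k => amat σm i l l - 2 * r i))
    (hDnonpos : Dl ≤ 0)
    (amax : ℝ)
    (hamax : amax = Finset.univ.sup' ⟨⟨0, hk⟩, Finset.mem_univ _⟩
        (fun i : Fin k => amat σm i l l))
    (that : ℝ) (shat : Fin d → ℝ)
    (hthat : that ∈ Set.Ico (0:ℝ) T)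
    (hcond : Real.log (su l / shat l) > -Dl * (T - that))
    (γl : ℝ) (hγpos : 0 < γl)
    (hγlt : γl < min ((1 / (2 * amax)) * (1 + Dl * (T - that) / Real.log (su l / shat l)))
        ((T - that) / (2 * Real.log (su l / shat l)))) :
    ∃ K₀ : ℝ, 1 < K₀ ∧ ∀ kl : ℝ, K₀ ≤ kl →
      ∀ t ∈ Set.Ioo (0:ℝ) T, ∀ s ∈ Rset sb su, ∀ i : Fin k,
        deriv (fun t' =>
            yl T ((T - that) * Real.log kl / Real.log (su l / shat l)) γl kl (su l) l t' s) t
          + Lop r σm Λ (fun t'' s'' _ =>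
              yl T ((T - that) * Real.log kl / Real.log (su l / shat l)) γl kl (su l) l t'' s'')
              t s i ≤ 0 := by
  have hq : 0 < T - that := sub_pos.2 hthat.2
  have hL : 0 < log (su l / shat l) :=
    (mul_nonneg (neg_nonneg.2 hDnonpos) hq.le).trans_lt hcond
  set c := (T - that) / log (su l / shat l) with hc_def
  have hc : 0 < c := div_pos hq hL
  have ha_le : ∀ i, amat σm i l l ≤ amax := fun i =>
    hamax ▸ Finset.le_sup' (fun i => amat σm i l l) (Finset.mem_univ i)
  have hD_le : ∀ i, Dl ≤ amat σm i l l - 2 * r i :=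
    fun i => hDl ▸ Finset.inf'_le (fun i => amat σm i l l - 2 * r i) (Finset.mem_univ i)
  have hβ : 0 < 1 - 2 * amax * γl + Dl * c := by
    refine one_sub_two_mul_add_pos_of_lt ((amat_apply_self_nonneg σm ⟨0, hk⟩ l).trans (ha_le _))
      hγpos ?_
    simpa only [hc_def, mul_div_assoc] using hγlt.trans_le (min_le_left _ _)
  obtain ⟨W, hW, hbound⟩ := exists_forall_ge_mul_add_le_mul_sq_div hγpos hc hT hDnonpos hβ
  refine ⟨exp W, one_lt_exp_iff.2 hW, fun kl hkl t ht s hs i => ?_⟩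
  have hkl0 : 0 < kl := (exp_pos W).trans_le hkl
  have hm : W ≤ log kl := (le_log_iff_exp_le hkl0).2 hkl
  have hsl : s l ∈ Set.Ioo (sb l) (su l) := hs l (Set.mem_univ l)
  have hsl0 : 0 < s l := (hbu l).1.trans_lt hsl.1
  have hw : log kl ≤ -log (s l / (kl * su l)) :=
    log_le_neg_log_div_mul hkl0 hsl0 hsl.2.le
  have hε : (T - that) * log kl / log (su l / shat l) = c * log kl := mul_div_right_comm _ _ _
  have hτ : 0 < T + c * log kl - t := by nlinarith [ht.2]
  rw [hε, deriv_yl_add_Lop_yl r σm Λ (hΛ2 i) hτ (by nlinarith [hsl.2]) hsl0]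
  refine mul_nonpos_of_nonneg_of_nonpos (div_nonneg (by unfold yl; positivity) hτ.le)
    (barrierRate_nonpos hγpos (amat_apply_self_nonneg σm i l) (hr i) hτ (by linarith)
      (by nlinarith [ha_le i]) (hD_le i) (hbound _ (hm.trans hw) _ hτ ?_))
  nlinarith [ht.1]

theorem stmt_16 (d k : ℕ) (hd : 1 ≤ d) (hk : 0 < k)
    (r : Fin k → ℝ) (hr : ∀ i, 0 ≤ r i)
    (σm : Fin k → Matrix (Fin d) (Fin d) ℝ) (hσ : ∀ i, IsUnit (σm i).det)
    (Λ : Fin k → Fin k → ℝ) (hΛ1 : ∀ i j, i ≠ j → 0 ≤ Λ i j)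
    (hΛ2 : ∀ i : Fin k, ∑ j, Λ i j = 0)
    (T : ℝ) (hT : 0 < T)
    (sb su : Fin d → ℝ) (hbu : ∀ l, 0 ≤ sb l ∧ sb l < su l)
    (l : Fin d)
    (Dl : ℝ)
    (hDl : Dl = Finset.univ.inf' ⟨⟨0, hk⟩, Finset.mem_univ _⟩
        (fun i : Fin k => amat σm i l l - 2 * r i))
    (hDnonpos : Dl ≤ 0)
    (amax : ℝ)
    (hamax : amax = Finset.univ.sup' ⟨⟨0, hk⟩, Finset.mem_univ _⟩
        (fun i : Fin k => amat σm i l l))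
    (that : ℝ) (shat : Fin d → ℝ)
    (hthat : that ∈ Set.Ico (0:ℝ) T) (hshat : shat ∈ Rset sb su)
    (hcond : Real.log (su l / shat l) > -Dl * (T - that))
    (γl : ℝ) (hγpos : 0 < γl)
    (hγlt : γl < min ((1 / (2 * amax)) * (1 + Dl * (T - that) / Real.log (su l / shat l)))
        ((T - that) / (2 * Real.log (su l / shat l)))) :
    ∃ K₀ : ℝ, 1 < K₀ ∧ ∀ kl : ℝ, K₀ ≤ kl →
      ∀ t ∈ Set.Ioo (0:ℝ) T, ∀ s ∈ Rset sb su, ∀ i : Fin k,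
        deriv (fun t' =>
            yl T ((T - that) * Real.log kl / Real.log (su l / shat l)) γl kl (su l) l t' s) t
          + Lop r σm Λ (fun t'' s'' _ =>
              yl T ((T - that) * Real.log kl / Real.log (su l / shat l)) γl kl (su l) l t'' s'')
              t s i ≤ 0 :=
  stmt_16_general d k hk r hr σm Λ hΛ2 T hT sb su hbu l Dl hDl hDnonpos amax hamax that shat hthat
    hcond γl hγpos hγlt
end
end
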